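/- arXiv:2002.05830 — 3 statements merged into one kernel-verified Lean document; each statement's English description precedes it below -/
import Mathlib

section
/- (Quadratic phase in the L²-critical case, key step of Proposition 2.9) Let d > 2 be a real number, a ∈ ℝ, and let W, θ : (0,∞) → ℝ be differentiable with W(ξ) > 0 for all ξ > 0. Suppose the function ξ ↦ ξ^{d−1}·W(ξ)²·( θ'(ξ) + (a/2)·ξ ) has derivative zero on (0,∞) (this is the θ-equation of the amplitude–phase system when σ·d = 2, since then 2/σ − 1 = d − 1 and the second term vanishes), and that ξ^{d−1}·W(ξ)²·( θ'(ξ) + (a/2)·ξ ) → 0 as ξ → 0⁺. Then θ'(ξ) = −(a/2)·ξ for all ξ > 0; consequently θ(ξ) = θ(ξ₀) + a·ξ₀²/4 − a·ξ²/4 for any ξ, ξ₀ > 0, i.e. the phase of the profile is the quadratic phase −aξ²/4 up to an additive constant. -/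
open Set Filter Topology

/-! The θ-equation says that the flux `F(ξ) = ξ^{d-1} W² (θ' + aξ/2)` is locally constant on
`(0,∞)`, hence constant since `(0,∞)` is connected; its limit at `0⁺` forces `F ≡ 0`.
As `ξ^{d-1} W² > 0`, this gives `θ' = -aξ/2`, which integrates to the quadratic phase. -/

lemma eqOn_const_of_hasDerivAt_zero_of_tendsto {E : Type*} [NormedAddCommGroup E]
    [NormedSpace ℝ E] {f : ℝ → E} {a : ℝ} {L : E}
    (hf : ∀ x > a, HasDerivAt f 0 x) (hlim : Tendsto f (𝓝[>] a) (𝓝 L)) :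
    EqOn f (fun _ => L) (Ioi a) := by
  obtain ⟨c, hc⟩ := isOpen_Ioi.exists_is_const_of_deriv_eq_zero isPreconnected_Ioi
    (fun x hx => (hf x hx).differentiableAt.differentiableWithinAt) fun x hx => (hf x hx).deriv
  have hcL : c = L :=
    tendsto_nhds_unique
      (tendsto_const_nhds.congr' (eventually_nhdsWithin_of_forall fun x hx => (hc x hx).symm))
      hlim
  exact fun x hx => hcL ▸ hc x hx

lemma IsOpen.exists_eqOn_quadratic_of_deriv_eq_linear {s : Set ℝ} (hs : IsOpen s)
    (hs' : IsPreconnected s) {θ : ℝ → ℝ} {b : ℝ} (hθ : DifferentiableOn ℝ θ s)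
    (hθ' : EqOn (deriv θ) (fun ξ => b * ξ) s) :
    ∃ c, EqOn θ (fun ξ => b / 2 * ξ ^ 2 + c) s := by
  have hq : ∀ ξ, HasDerivAt (fun ξ : ℝ => b / 2 * ξ ^ 2) (b * ξ) ξ := fun ξ =>
    ((hasDerivAt_pow 2 ξ).const_mul (b / 2)).congr_deriv (by ring)
  exact hs.exists_eq_add_of_deriv_eq hs' hθ
    (fun ξ _ => (hq ξ).differentiableAt.differentiableWithinAt)
    fun ξ hξ => (hθ' hξ).trans (hq ξ).deriv.symm

theorem critical_quadratic_phase_general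
    (d a : ℝ) (W θ : ℝ → ℝ)
    (hθ : ∀ ξ > (0 : ℝ), DifferentiableAt ℝ θ ξ)
    (hWpos : ∀ ξ > (0 : ℝ), 0 < W ξ)
    (hF : ∀ ξ > (0 : ℝ),
      HasDerivAt (fun t => t ^ (d - 1) * W t ^ 2 * (deriv θ t + a / 2 * t)) 0 ξ)
    (hF0 : Filter.Tendsto (fun t => t ^ (d - 1) * W t ^ 2 * (deriv θ t + a / 2 * t))
      (nhdsWithin 0 (Set.Ioi 0)) (nhds 0)) :
    (∀ ξ > (0 : ℝ), deriv θ ξ = -(a / 2) * ξ) ∧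
      (∀ ξ > (0 : ℝ), ∀ ξ₀ > (0 : ℝ),
        θ ξ = θ ξ₀ + a * ξ₀ ^ 2 / 4 - a * ξ ^ 2 / 4) := by
  have hflux := eqOn_const_of_hasDerivAt_zero_of_tendsto hF hF0
  have hθ' : ∀ ξ > (0 : ℝ), deriv θ ξ = -(a / 2) * ξ := fun ξ hξ => by
    have hweight : 0 < ξ ^ (d - 1) * W ξ ^ 2 :=
      mul_pos (Real.rpow_pos_of_pos hξ _) (pow_pos (hWpos ξ hξ) 2)
    linarith [(mul_eq_zero.1 (hflux hξ)).resolve_left hweight.ne']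
  obtain ⟨c, hc⟩ := isOpen_Ioi.exists_eqOn_quadratic_of_deriv_eq_linear isPreconnected_Ioi
    (fun ξ hξ => (hθ ξ hξ).differentiableWithinAt) fun ξ hξ => hθ' ξ hξ
  refine ⟨hθ', fun ξ hξ ξ₀ hξ₀ => ?_⟩
  linear_combination hc hξ - hc hξ₀

/-- Quadratic phase in the L²-critical case (key step of Proposition 2.9): if
`ξ^{d-1} W(ξ)² (θ'(ξ) + (a/2)ξ)` has derivative zero on `(0,∞)` and tends to `0`
as `ξ → 0⁺`, then `θ'(ξ) = -(a/2)ξ` for all `ξ > 0`, and consequently the phase is the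
quadratic phase `-aξ²/4` up to an additive constant. -/
theorem critical_quadratic_phase
    (d a : ℝ) (hd : 2 < d) (W θ : ℝ → ℝ)
    (hW : ∀ ξ > (0 : ℝ), DifferentiableAt ℝ W ξ)
    (hθ : ∀ ξ > (0 : ℝ), DifferentiableAt ℝ θ ξ)
    (hWpos : ∀ ξ > (0 : ℝ), 0 < W ξ)
    (hF : ∀ ξ > (0 : ℝ),
      HasDerivAt (fun t => t ^ (d - 1) * W t ^ 2 * (deriv θ t + a / 2 * t)) 0 ξ)
    (hF0 : Filter.Tendsto (fun t => t ^ (d - 1) * W t ^ 2 * (deriv θ t + a / 2 * t))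
      (nhdsWithin 0 (Set.Ioi 0)) (nhds 0)) :
    (∀ ξ > (0 : ℝ), deriv θ ξ = -(a / 2) * ξ) ∧
      (∀ ξ > (0 : ℝ), ∀ ξ₀ > (0 : ℝ),
        θ ξ = θ ξ₀ + a * ξ₀ ^ 2 / 4 - a * ξ ^ 2 / 4) :=
  critical_quadratic_phase_general d a W θ hθ hWpos hF hF0
end

section
/- (Lemma 4.2, identity (E:R1): zero Hamiltonian / Pohozaev identity for the critical ground state) Let (R, φ_R) be a radial ground state. Then ∫₀^∞ ( R'(ξ)² − V(R)(ξ)/(2σ+1) )·ξ^{d−1} dξ = 0. -/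
open MeasureTheory Set Filter

noncomputable section

/-- A radial ground state of the L²-critical generalized Hartree equation:
a positive radial solution `R` of `ΔR - R + ((-Δ)⁻¹ R^{2σ+1}) R^{2σ} = 0`,
written in radial coordinates, together with the potential `phi` encoding the
radial nonlocal term `(-Δ)⁻¹ R^{2σ+1}`, and assumed to decay exponentially. -/
structure RadialGroundState (d : ℕ) (σ : ℝ) where
  R : ℝ → ℝ
  phi : ℝ → ℝ
  smooth_R : ContDiffOn ℝ 2 R (Set.Ici 0)
  smooth_phi : ContDiffOn ℝ 2 phi (Set.Ici 0)
  R_pos : ∀ ξ ≥ (0 : ℝ), 0 < R ξ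
  R_deriv_zero : deriv R 0 = 0
  phi_eq : ∀ ξ > (0 : ℝ),
    deriv (deriv phi) ξ + ((d : ℝ) - 1) / ξ * deriv phi ξ = -(R ξ ^ (2 * σ + 1))
  phi_deriv_zero : deriv phi 0 = 0
  phi_lim : Filter.Tendsto phi Filter.atTop (nhds 0)
  R_eq : ∀ ξ > (0 : ℝ),
    deriv (deriv R) ξ + ((d : ℝ) - 1) / ξ * deriv R ξ - R ξ + phi ξ * R ξ ^ (2 * σ) = 0
  decay : ∃ C δ : ℝ, 0 < C ∧ 0 < δ ∧
    ∀ ξ ≥ (0 : ℝ), |R ξ| + |deriv R ξ| ≤ C * Real.exp (-δ * ξ)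

/-!
Pohozaev argument. Multiplying the equation for `R` by `ξ^d R'` and by `(d/2) ξ^(d-1) R`, and the
equation for `φ` by the matching multipliers, turns the Hamiltonian density
`(R'² - φ R^(2σ+1)/(2σ+1)) ξ^(d-1)` into the exact derivative of an explicit functional
`W` (`pohozaev`); the terms that do not telescope cancel precisely because `σ = 2/d`.
Then the integral equals `W(∞) - W(0)`. `W(0) = 0` since every term carries a factor `ξ^(d-1)` or `ξ^d`. At infinity, the
terms built from `R` and `R'` die by exponential decay, while the nonlocal terms are controlled by
the flux `ξ^(d-1) φ'`, which converges because its derivative `-ξ^(d-1) R^(2σ+1)` is integrable;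
since `d ≥ 3`, `ξ^d φ'² = (ξ^(d-1) φ')² / ξ^(d-2)` then vanishes at infinity as well.
-/

open Asymptotics Real
open scoped Topology

lemma MeasureTheory.IntegrableOn.of_isBigO_principal {α E F : Type*} [TopologicalSpace α]
    [MeasurableSpace α] [OpensMeasurableSpace α] [NormedAddCommGroup E]
    [SecondCountableTopology E] [NormedAddCommGroup F] {μ : Measure α} {f : α → E} {g : α → F}
    {s : Set α} (hs : MeasurableSet s) (hf : ContinuousOn f s) (hfg : f =O[𝓟 s] g)
    (hg : IntegrableOn g s μ) : IntegrableOn f s μ := by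
  obtain ⟨c, hc⟩ := isBigO_principal.1 hfg
  exact (hg.norm.const_mul c).mono' (hf.aestronglyMeasurable hs)
    ((ae_restrict_iff' hs).2 (ae_of_all _ hc))

lemma tendsto_pow_mul_exp_neg_mul_atTop_nhds_zero (k : ℕ) {b : ℝ} (hb : 0 < b) :
    Tendsto (fun x : ℝ => x ^ k * exp (-b * x)) atTop (𝓝 0) := by
  simpa using tendsto_rpow_mul_exp_neg_mul_atTop_nhds_zero k b hb

lemma integrableOn_pow_mul_exp_neg_mul_Ioi (k : ℕ) {b : ℝ} (hb : 0 < b) :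
    IntegrableOn (fun x : ℝ => x ^ k * exp (-b * x)) (Ioi 0) := by
  simpa using integrableOn_rpow_mul_exp_neg_mul_rpow (s := k) (p := 1)
    (by linarith [k.cast_nonneg (α := ℝ)]) one_pos hb

lemma ContinuousOn.isBigO_one_of_tendsto_atTop {f : ℝ → ℝ} {a c : ℝ}
    (hf : ContinuousOn f (Ici a)) (hlim : Tendsto f atTop (𝓝 c)) :
    f =O[𝓟 (Ici a)] fun _ => (1 : ℝ) := by
  obtain ⟨C, hC⟩ := (hlim.isBigO_one ℝ).bound
  obtain ⟨X, hX⟩ := eventually_atTop.1 hC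
  have hnear : f =O[𝓟 (Icc a X)] fun _ => (1 : ℝ) :=
    (hf.mono Icc_subset_Ici_self).isBigO_principal isCompact_Icc (by norm_num)
  have hfar : f =O[𝓟 (Ici X)] fun _ => (1 : ℝ) := isBigO_principal.2 ⟨C, hX⟩
  refine (hnear.sup hfar).mono ?_
  rw [sup_principal, principal_mono]
  exact fun x hx => (le_total x X).imp (fun h => ⟨hx, h⟩) id

lemma ContDiffOn.tendsto_deriv_nhdsGT {f : ℝ → ℝ} {a : ℝ} (hf : ContDiffOn ℝ 1 f (Ici a)) :
    Tendsto (deriv f) (𝓝[>] a) (𝓝 (derivWithin f (Ici a) a)) := by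
  have hc := hf.continuousOn_derivWithin (uniqueDiffOn_Ici a) le_rfl a self_mem_Ici
  refine (hc.mono Ioi_subset_Ici_self).tendsto.congr' ?_
  filter_upwards [self_mem_nhdsWithin] with x hx
  exact derivWithin_of_mem_nhds (Ici_mem_nhds hx)

lemma ContDiffOn.hasDerivAt_of_Ici {f : ℝ → ℝ} {a x : ℝ} (hf : ContDiffOn ℝ 1 f (Ici a))
    (hx : a < x) : HasDerivAt f (deriv f x) x :=
  ((hf.differentiableOn one_ne_zero x hx.le).differentiableAt (Ici_mem_nhds hx)).hasDerivAt

lemma ContDiffOn.hasDerivAt_deriv_of_Ici {f : ℝ → ℝ} {a x : ℝ} (hf : ContDiffOn ℝ 2 f (Ici a))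
    (hx : a < x) : HasDerivAt (deriv f) (deriv (deriv f) x) x := by
  have hf' : ContDiffOn ℝ 1 (deriv f) (Ioi a) :=
    (hf.mono Ioi_subset_Ici_self).deriv_of_isOpen isOpen_Ioi (by norm_num)
  exact ((hf'.differentiableOn one_ne_zero x hx).differentiableAt (Ioi_mem_nhds hx)).hasDerivAt

lemma hasDerivAt_pow_sub_one {d : ℕ} (hd : 1 ≤ d) {x : ℝ} (hx : x ≠ 0) :
    HasDerivAt (fun x : ℝ => x ^ (d - 1)) (((d : ℝ) - 1) / x * x ^ (d - 1)) x := by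
  obtain ⟨k, rfl⟩ := Nat.exists_eq_add_of_le' hd
  rcases k with _ | k
  · simpa using hasDerivAt_const x (1 : ℝ)
  · rw [Nat.add_sub_cancel]
    refine (hasDerivAt_pow (k + 1) x).congr_deriv ?_
    rw [Nat.add_sub_cancel]
    push_cast
    field_simp
    ring

lemma exp_neg_mul_isBigO_one {δ : ℝ} (hδ : 0 ≤ δ) :
    (fun ξ => exp (-δ * ξ)) =O[𝓟 (Ioi 0)] fun _ => (1 : ℝ) :=
  isBigO_principal.2 ⟨1, fun ξ hξ => by
    rw [norm_one, mul_one, norm_of_nonneg (exp_nonneg _), exp_le_one_iff]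
    nlinarith [mem_Ioi.1 hξ]⟩

lemma integrableOn_mul_pow_of_isBigO_exp {g : ℝ → ℝ} {δ : ℝ} (hδ : 0 < δ) (k : ℕ)
    (hg : ContinuousOn g (Ioi 0)) (hgO : g =O[𝓟 (Ioi 0)] fun ξ => exp (-δ * ξ)) :
    IntegrableOn (fun ξ => g ξ * ξ ^ k) (Ioi 0) :=
  .of_isBigO_principal measurableSet_Ioi (hg.mul (continuousOn_pow k))
    (((isBigO_refl _ _).mul hgO).congr (fun _ => mul_comm _ _) fun _ => rfl)
    (integrableOn_pow_mul_exp_neg_mul_Ioi k hδ)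

lemma tendsto_pow_mul_of_isBigO_exp {f : ℝ → ℝ} {δ : ℝ} (hδ : 0 < δ) (k : ℕ)
    (hf : f =O[atTop] fun ξ => exp (-δ * ξ)) :
    Tendsto (fun ξ => ξ ^ k * f ξ) atTop (𝓝 0) :=
  ((isBigO_refl _ _).mul hf).trans_tendsto (tendsto_pow_mul_exp_neg_mul_atTop_nhds_zero k hδ)

namespace RadialGroundState

variable {d : ℕ} {σ : ℝ} (G : RadialGroundState d σ)

def hamiltonianDensity (ξ : ℝ) : ℝ :=
  (deriv G.R ξ ^ 2 - G.phi ξ * G.R ξ ^ (2 * σ + 1) / (2 * σ + 1)) * ξ ^ (d - 1)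

def pohozaev (ξ : ℝ) : ℝ :=
  ξ ^ (d - 1) * ((d : ℝ) / 2 * G.R ξ * deriv G.R ξ
      + ((d : ℝ) - 2) / (2 * (2 * σ + 1)) * G.phi ξ * deriv G.phi ξ)
  + ξ ^ d * ((deriv G.R ξ ^ 2 - G.R ξ ^ 2) / 2 + G.phi ξ * G.R ξ ^ (2 * σ + 1) / (2 * σ + 1)
      + deriv G.phi ξ ^ 2 / (2 * (2 * σ + 1)))

lemma hasDerivAt_pow_mul_deriv_phi (hd : 1 ≤ d) {ξ : ℝ} (hξ : 0 < ξ) :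
    HasDerivAt (fun ξ => ξ ^ (d - 1) * deriv G.phi ξ)
      (-(G.R ξ ^ (2 * σ + 1) * ξ ^ (d - 1))) ξ := by
  refine ((hasDerivAt_pow_sub_one hd hξ.ne').mul
    (G.smooth_phi.hasDerivAt_deriv_of_Ici hξ)).congr_deriv ?_
  rw [eq_sub_of_add_eq (G.phi_eq ξ hξ)]
  field_simp
  ring

lemma hasDerivAt_pohozaev (hd : 1 ≤ d) (hσ : σ = 2 / d) {ξ : ℝ} (hξ : 0 < ξ) :
    HasDerivAt G.pohozaev (G.hamiltonianDensity ξ) ξ := by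
  have hR := G.smooth_R.of_le one_le_two |>.hasDerivAt_of_Ici hξ
  have hR' := G.smooth_R.hasDerivAt_deriv_of_Ici hξ
  have hφ := G.smooth_phi.of_le one_le_two |>.hasDerivAt_of_Ici hξ
  have hφ' := G.smooth_phi.hasDerivAt_deriv_of_Ici hξ
  have hp := hasDerivAt_pow_sub_one hd hξ.ne'
  have hRq : HasDerivAt (fun ξ => G.R ξ ^ (2 * σ + 1))
      (deriv G.R ξ * (2 * σ + 1) * G.R ξ ^ (2 * σ)) ξ := by
    simpa using hR.rpow_const (p := 2 * σ + 1) (Or.inl (G.R_pos ξ hξ.le).ne')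
  refine ((hp.mul (((hR.const_mul _).mul hR').add ((hφ.const_mul _).mul hφ'))).add
    ((hasDerivAt_pow d ξ).mul ((((hR'.pow 2).sub (hR.pow 2)).div_const 2).add
      ((hφ.mul hRq).div_const _) |>.add ((hφ'.pow 2).div_const _)))).congr_deriv ?_
  have hR'' : deriv (deriv G.R) ξ
      = G.R ξ - G.phi ξ * G.R ξ ^ (2 * σ) - ((d : ℝ) - 1) / ξ * deriv G.R ξ := by
    linarith [G.R_eq ξ hξ]
  simp only [Pi.mul_apply, Pi.add_apply, Pi.sub_apply, Pi.pow_apply]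
  rw [eq_sub_of_add_eq (G.phi_eq ξ hξ), hR'', hamiltonianDensity,
    Real.rpow_add_one (G.R_pos ξ hξ.le).ne', ← pow_sub_one_mul (by omega : d ≠ 0) ξ]
  subst hσ
  field_simp
  ring

lemma exists_R_deriv_R_isBigO_exp : ∃ δ > 0,
    G.R =O[𝓟 (Ioi 0)] (fun ξ => exp (-δ * ξ)) ∧
      deriv G.R =O[𝓟 (Ioi 0)] (fun ξ => exp (-δ * ξ)) := by
  obtain ⟨C, δ, -, hδ, hdecay⟩ := G.decay
  refine ⟨δ, hδ, isBigO_principal.2 ⟨C, fun ξ hξ => ?_⟩,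
    isBigO_principal.2 ⟨C, fun ξ hξ => ?_⟩⟩ <;>
  · have := hdecay ξ (le_of_lt hξ)
    simp only [norm_eq_abs, abs_exp]
    linarith [abs_nonneg (G.R ξ), abs_nonneg (deriv G.R ξ)]

lemma phi_isBigO_one : G.phi =O[𝓟 (Ioi 0)] fun _ => (1 : ℝ) :=
  (G.smooth_phi.continuousOn.isBigO_one_of_tendsto_atTop G.phi_lim).mono
    (principal_mono.2 Ioi_subset_Ici_self)

lemma rpow_R_isBigO_exp (hσ : 0 ≤ σ) {δ : ℝ} (hδ : 0 ≤ δ)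
    (hR : G.R =O[𝓟 (Ioi 0)] fun ξ => exp (-δ * ξ)) :
    (fun ξ => G.R ξ ^ (2 * σ + 1)) =O[𝓟 (Ioi 0)] fun ξ => exp (-δ * ξ) := by
  have hR2σ : (fun ξ => G.R ξ ^ (2 * σ)) =O[𝓟 (Ioi 0)] fun _ => (1 : ℝ) := by
    simpa using ((hR.trans (exp_neg_mul_isBigO_one hδ)).rpow (by positivity)
      (Eventually.of_forall fun _ => zero_le_one))
  refine (hR2σ.mul hR).congr' ?_ (by simp)
  filter_upwards [mem_principal_self _] with ξ hξ
  exact (rpow_add_one (G.R_pos ξ (le_of_lt hξ)).ne' _).symm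

lemma continuousOn_rpow_R : ContinuousOn (fun ξ => G.R ξ ^ (2 * σ + 1)) (Ici 0) :=
  G.smooth_R.continuousOn.rpow_const fun ξ hξ => Or.inl (G.R_pos ξ hξ).ne'

lemma integrableOn_rpow_R_mul_pow (hσ : 0 ≤ σ) (k : ℕ) :
    IntegrableOn (fun ξ => G.R ξ ^ (2 * σ + 1) * ξ ^ k) (Ioi 0) := by
  obtain ⟨δ, hδ, hR, -⟩ := G.exists_R_deriv_R_isBigO_exp
  exact integrableOn_mul_pow_of_isBigO_exp hδ k (G.continuousOn_rpow_R.mono Ioi_subset_Ici_self)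
    (G.rpow_R_isBigO_exp hσ hδ.le hR)

lemma integrableOn_hamiltonianDensity (hσ : 0 ≤ σ) :
    IntegrableOn G.hamiltonianDensity (Ioi 0) := by
  obtain ⟨δ, hδ, hR, hR'⟩ := G.exists_R_deriv_R_isBigO_exp
  have hR'1 := hR'.trans (exp_neg_mul_isBigO_one hδ.le)
  have hRq := G.rpow_R_isBigO_exp hσ hδ.le hR
  refine integrableOn_mul_pow_of_isBigO_exp hδ (d - 1) ?_ ?_
  · have hR'c : ContinuousOn (deriv G.R) (Ioi 0) :=
      (G.smooth_R.mono Ioi_subset_Ici_self).continuousOn_deriv_of_isOpen isOpen_Ioi one_le_two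
    exact (hR'c.pow 2).sub (((G.smooth_phi.continuousOn.mul G.continuousOn_rpow_R).mono
      Ioi_subset_Ici_self).div_const _)
  · refine (IsBigO.sub ?_ ?_)
    · simpa [sq] using hR'1.mul hR'
    · simpa [div_eq_inv_mul, mul_assoc] using
        (G.phi_isBigO_one.mul hRq).const_mul_left (2 * σ + 1)⁻¹

lemma pohozaev_zero (hd : 2 ≤ d) : G.pohozaev 0 = 0 := by
  simp [pohozaev, zero_pow (by omega : d - 1 ≠ 0), zero_pow (by omega : d ≠ 0)]

lemma continuousWithinAt_pohozaev_zero (hd : 2 ≤ d) :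
    ContinuousWithinAt G.pohozaev (Ici 0) 0 := by
  rw [← continuousWithinAt_Ioi_iff_Ici, ContinuousWithinAt, G.pohozaev_zero hd]
  have hR := (G.smooth_R.continuousOn 0 self_mem_Ici).mono Ioi_subset_Ici_self
  have hR' := (G.smooth_R.of_le one_le_two).tendsto_deriv_nhdsGT
  have hφ := (G.smooth_phi.continuousOn 0 self_mem_Ici).mono Ioi_subset_Ici_self
  have hφ' := (G.smooth_phi.of_le one_le_two).tendsto_deriv_nhdsGT
  have hRq := (G.continuousOn_rpow_R 0 self_mem_Ici).mono Ioi_subset_Ici_self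
  have hpow : ∀ k ≠ 0, Tendsto (fun ξ : ℝ => ξ ^ k) (𝓝[>] 0) (𝓝 0) := fun k hk =>
    ((continuous_pow k).tendsto' 0 0 (zero_pow hk)).mono_left nhdsWithin_le_nhds
  have key := ((hpow (d - 1) (by omega)).mul
    (((hR.tendsto.const_mul ((d : ℝ) / 2)).mul hR').add
      ((hφ.tendsto.const_mul (((d : ℝ) - 2) / (2 * (2 * σ + 1)))).mul hφ'))).add
    ((hpow d (by omega)).mul ((((hR'.pow 2).sub (hR.tendsto.pow 2)).div_const 2).add
      ((hφ.tendsto.mul hRq.tendsto).div_const (2 * σ + 1)) |>.add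
      ((hφ'.pow 2).div_const (2 * (2 * σ + 1)))))
  rw [zero_mul, zero_mul, add_zero] at key
  exact key

lemma exists_tendsto_pow_mul_deriv_phi (hd : 1 ≤ d) (hσ : 0 ≤ σ) :
    ∃ L, Tendsto (fun ξ => ξ ^ (d - 1) * deriv G.phi ξ) atTop (𝓝 L) :=
  ⟨_, tendsto_limUnder_of_hasDerivAt_of_integrableOn_Ioi
    (fun _ hξ => G.hasDerivAt_pow_mul_deriv_phi hd hξ) (G.integrableOn_rpow_R_mul_pow hσ _).neg⟩

lemma tendsto_pohozaev_atTop (hd : 3 ≤ d) (hσ : 0 ≤ σ) : Tendsto G.pohozaev atTop (𝓝 0) := by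
  obtain ⟨δ, hδ, hR, hR'⟩ := G.exists_R_deriv_R_isBigO_exp
  have hatTop : atTop ≤ 𝓟 (Ioi (0 : ℝ)) := le_principal_iff.2 (Ioi_mem_atTop 0)
  have hRk k := tendsto_pow_mul_of_isBigO_exp hδ k (hR.mono hatTop)
  have hR'k k := tendsto_pow_mul_of_isBigO_exp hδ k (hR'.mono hatTop)
  have hRqk := tendsto_pow_mul_of_isBigO_exp hδ d ((G.rpow_R_isBigO_exp hσ hδ.le hR).mono hatTop)
  have hR0 : Tendsto G.R atTop (𝓝 0) := by simpa using hRk 0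
  have hR'0 : Tendsto (deriv G.R) atTop (𝓝 0) := by simpa using hR'k 0
  obtain ⟨L, hψ⟩ := G.exists_tendsto_pow_mul_deriv_phi (by omega) hσ
  have hinv : Tendsto (fun ξ : ℝ => (ξ ^ (d - 2))⁻¹) atTop (𝓝 0) :=
    tendsto_inv_atTop_zero.comp (tendsto_pow_atTop (by omega))
  have key := ((((hRk (d - 1)).mul hR'0).const_mul ((d : ℝ) / 2)).add
    ((((hR'k d).mul hR'0).sub ((hRk d).mul hR0)).div_const 2)).add
    ((G.phi_lim.mul hRqk).div_const (2 * σ + 1)) |>.add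
    ((hψ.mul G.phi_lim).const_mul (((d : ℝ) - 2) / (2 * (2 * σ + 1)))) |>.add
    (((hψ.pow 2).mul hinv).div_const (2 * (2 * σ + 1)))
  -- `key` is `W` regrouped into products of factors with known limits
  simp only [mul_zero, sub_zero, zero_div, add_zero] at key
  refine key.congr' ?_
  filter_upwards [eventually_gt_atTop 0] with ξ hξ
  obtain ⟨k, rfl⟩ := Nat.exists_eq_add_of_le' (by omega : 2 ≤ d)
  rw [pohozaev, show k + 2 - 1 = k + 1 from rfl, show k + 2 - 2 = k from rfl]
  field_simp
  ring

end RadialGroundState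

/-- Lemma 4.2, identity (E:R1): zero Hamiltonian / Pohozaev identity for the
L²-critical ground state (`σ = 2/d`, `V(R) = φ_R R^{2σ+1}`). -/
theorem groundState_zero_hamiltonian
    (d : ℕ) (σ : ℝ) (hd : 3 ≤ d) (hσ : σ = 2 / (d : ℝ))
    (G : RadialGroundState d σ) :
    ∫ ξ in Set.Ioi (0 : ℝ),
        ((deriv G.R ξ) ^ 2 - G.phi ξ * G.R ξ ^ (2 * σ + 1) / (2 * σ + 1)) * ξ ^ (d - 1) = 0 := by
  have hσ0 : 0 ≤ σ := hσ ▸ by positivity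
  have h := integral_Ioi_of_hasDerivAt_of_tendsto (G.continuousWithinAt_pohozaev_zero (by omega))
    (fun ξ hξ => G.hasDerivAt_pohozaev (by omega) hσ hξ) (G.integrableOn_hamiltonianDensity hσ0)
    (G.tendsto_pohozaev_atTop hd hσ0)
  rwa [G.pohozaev_zero (by omega), sub_zero] at h

end
end

section
/- (Logarithmically weighted Pohozaev identity, third identity in the proof of Lemma 4.2) Let (R, φ_R) be a radial ground state. Then −∫₀^∞ ( R'(ξ)² + R(ξ)² − V(R)(ξ) )·ξ^{d−1}·ln ξ dξ = ∫₀^∞ R(ξ)·(R'(ξ)/ξ)·ξ^{d−1} dξ. -/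
open MeasureTheory Set Filter

noncomputable section

/-!
Multiply the radial equation by `ξ^{d-1} R log ξ`. Since `(ξ^{d-1} R')' = ξ^{d-1} (R - φ R^{2σ})`,
the function `F = ξ^{d-1} R' R log ξ` satisfies
`F' = (R'² + R² - φ R^{2σ+1}) ξ^{d-1} log ξ + R (R'/ξ) ξ^{d-1}`.
The exponential decay of `R` and `R'` (with `φ` bounded and `σ ≥ 0`) dominates both terms by
`(ξ^{d-2} + ξ^d) e^{-δξ}`, which is integrable, vanishes at infinity, and vanishes at `0` when
`d ≥ 3`; so `∫₀^∞ F' = 0`.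
-/

open Real Topology

lemma Real.abs_log_le_add_inv {x : ℝ} (hx : 0 ≤ x) : |log x| ≤ x + x⁻¹ :=
  abs_le.2 ⟨by linarith [neg_inv_le_log hx], by linarith [log_le_self hx, inv_nonneg.2 hx]⟩

lemma ContinuousOn.isBounded_image_Ici_of_tendsto {E : Type*} [PseudoMetricSpace E]
    {f : ℝ → E} {a : ℝ} {m : E} (hf : ContinuousOn f (Ici a))
    (hlim : Tendsto f atTop (𝓝 m)) :
    Bornology.IsBounded (f '' Ici a) := by
  obtain ⟨s, hs, hbdd⟩ := Metric.exists_isBounded_image_of_tendsto hlim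
  obtain ⟨N, hN⟩ := mem_atTop_sets.1 hs
  have hcover : Ici a ⊆ Icc a N ∪ s := fun x hx =>
    (le_total x N).elim (fun h => Or.inl ⟨hx, h⟩) (fun h => Or.inr (hN x h))
  have hcompact : Bornology.IsBounded (f '' Icc a N) :=
    (isCompact_Icc.image_of_continuousOn (hf.mono Icc_subset_Ici_self)).isBounded
  exact (hcompact.union hbdd).subset (image_union f _ s ▸ image_mono hcover)

/-- Dominates `x ^ (n + 1) * |log x| * exp (-b * x)`, since `|log x| ≤ x + x⁻¹`. -/
def polyExpWeight (n : ℕ) (b x : ℝ) : ℝ := (x ^ n + x ^ (n + 2)) * exp (-b * x)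

lemma polyExpWeight_eq (n : ℕ) (b : ℝ) :
    polyExpWeight n b = fun x => x ^ n * exp (-b * x) + x ^ (n + 2) * exp (-b * x) :=
  funext fun _ => add_mul _ _ _

lemma integrableOn_polyExpWeight (n : ℕ) {b : ℝ} (hb : 0 < b) :
    IntegrableOn (polyExpWeight n b) (Ioi 0) := by
  have hpow (k : ℕ) : IntegrableOn (fun x : ℝ => x ^ k * exp (-b * x)) (Ioi 0) := by
    simpa [rpow_natCast] using
      integrableOn_rpow_mul_exp_neg_mul_rpow (s := k) (p := 1)
        (by linarith [k.cast_nonneg (α := ℝ)]) one_pos hb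
  rw [polyExpWeight_eq]
  exact (hpow n).add (hpow (n + 2))

lemma tendsto_polyExpWeight_atTop (n : ℕ) {b : ℝ} (hb : 0 < b) :
    Tendsto (polyExpWeight n b) atTop (𝓝 0) := by
  have hpow (k : ℕ) : Tendsto (fun x : ℝ => x ^ k * exp (-b * x)) atTop (𝓝 0) := by
    simpa [rpow_natCast] using tendsto_rpow_mul_exp_neg_mul_atTop_nhds_zero k b hb
  rw [polyExpWeight_eq, ← add_zero 0]
  exact (hpow n).add (hpow (n + 2))

lemma tendsto_polyExpWeight_zero {n : ℕ} (hn : n ≠ 0) (b : ℝ) :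
    Tendsto (polyExpWeight n b) (𝓝 0) (𝓝 0) := by
  have hcont : Continuous (polyExpWeight n b) := by unfold polyExpWeight; fun_prop
  simpa [polyExpWeight, hn] using hcont.tendsto 0

lemma abs_mul_pow_succ_mul_log_le {g K b x : ℝ} (n : ℕ) (hx : 0 < x)
    (hg : |g| ≤ K * exp (-b * x)) :
    |g * x ^ (n + 1) * log x| ≤ K * polyExpWeight n b x := by
  have hlog : x ^ (n + 1) * |log x| ≤ x ^ n + x ^ (n + 2) := calc
    x ^ (n + 1) * |log x| ≤ x ^ (n + 1) * (x + x⁻¹) :=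
      mul_le_mul_of_nonneg_left (abs_log_le_add_inv hx.le) (by positivity)
    _ = x ^ n + x ^ (n + 2) := by field_simp; ring
  calc |g * x ^ (n + 1) * log x| = |g| * (x ^ (n + 1) * |log x|) := by
        rw [abs_mul, abs_mul, abs_pow, abs_of_pos hx, mul_assoc]
    _ ≤ K * exp (-b * x) * (x ^ n + x ^ (n + 2)) :=
        mul_le_mul hg hlog (by positivity) ((abs_nonneg g).trans hg)
    _ = K * polyExpWeight n b x := by rw [polyExpWeight]; ring

lemma integrableOn_Ioi_of_abs_le_polyExpWeight {f : ℝ → ℝ} {K b : ℝ} {n : ℕ} (hb : 0 < b)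
    (hf : ContinuousOn f (Ioi 0)) (hle : ∀ x > 0, |f x| ≤ K * polyExpWeight n b x) :
    IntegrableOn f (Ioi 0) :=
  ((integrableOn_polyExpWeight n hb).const_mul K).mono' (hf.aestronglyMeasurable measurableSet_Ioi)
    ((ae_restrict_iff' measurableSet_Ioi).2 (Eventually.of_forall hle))

namespace RadialGroundState

variable {d : ℕ} {σ : ℝ} (G : RadialGroundState d σ)

def energyDensity (ξ : ℝ) : ℝ :=
  deriv G.R ξ ^ 2 + G.R ξ ^ 2 - G.phi ξ * G.R ξ ^ (2 * σ + 1)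

def logFlux (ξ : ℝ) : ℝ := ξ ^ (d - 1) * deriv G.R ξ * G.R ξ * log ξ

lemma hasDerivAt_R {ξ : ℝ} (hξ : 0 < ξ) : HasDerivAt G.R (deriv G.R ξ) ξ :=
  ((G.smooth_R.contDiffAt (Ici_mem_nhds hξ)).differentiableAt two_ne_zero).hasDerivAt

lemma contDiffOn_deriv_R : ContDiffOn ℝ 1 (deriv G.R) (Ioi 0) :=
  (G.smooth_R.mono Ioi_subset_Ici_self).deriv_of_isOpen isOpen_Ioi (by norm_num)

lemma hasDerivAt_deriv_R {ξ : ℝ} (hξ : 0 < ξ) :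
    HasDerivAt (deriv G.R) (deriv (deriv G.R) ξ) ξ :=
  ((G.contDiffOn_deriv_R.contDiffAt (Ioi_mem_nhds hξ)).differentiableAt one_ne_zero).hasDerivAt

lemma continuousOn_R : ContinuousOn G.R (Ioi 0) :=
  G.smooth_R.continuousOn.mono Ioi_subset_Ici_self

lemma continuousOn_energyDensity : ContinuousOn G.energyDensity (Ioi 0) := by
  have hφ : ContinuousOn G.phi (Ioi 0) := G.smooth_phi.continuousOn.mono Ioi_subset_Ici_self
  exact ((G.contDiffOn_deriv_R.continuousOn.pow 2).add (G.continuousOn_R.pow 2)).sub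
    (hφ.mul (G.continuousOn_R.rpow_const fun x hx => Or.inl (G.R_pos x (le_of_lt hx)).ne'))

lemma hasDerivAt_logFlux (hd : 2 ≤ d) {ξ : ℝ} (hξ : 0 < ξ) :
    HasDerivAt G.logFlux
      (G.energyDensity ξ * ξ ^ (d - 1) * log ξ + G.R ξ * (deriv G.R ξ / ξ) * ξ ^ (d - 1))
      ξ := by
  have hR'' : deriv (deriv G.R) ξ
      = G.R ξ - G.phi ξ * G.R ξ ^ (2 * σ) - ((d : ℝ) - 1) / ξ * deriv G.R ξ := by
    linarith [G.R_eq ξ hξ]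
  have hpow : G.R ξ ^ (2 * σ + 1) = G.R ξ ^ (2 * σ) * G.R ξ := by
    rw [rpow_add (G.R_pos ξ hξ.le), rpow_one]
  refine ((((hasDerivAt_pow (d - 1) ξ).mul (G.hasDerivAt_deriv_R hξ)).mul
    (G.hasDerivAt_R hξ)).mul (hasDerivAt_log hξ.ne')).congr_deriv ?_
  rw [hR'', energyDensity, hpow]
  obtain ⟨k, rfl⟩ : ∃ k, d = k + 2 := ⟨d - 2, by omega⟩
  simp only [Pi.mul_apply, Nat.add_sub_cancel, show k + 2 - 1 = k + 1 from rfl, pow_succ]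
  push_cast
  field_simp
  ring

lemma exists_abs_le_exp : ∃ C δ : ℝ, 0 < C ∧ 0 < δ ∧
    ∀ ξ ≥ 0, |G.R ξ| ≤ C * exp (-δ * ξ) ∧ |deriv G.R ξ| ≤ C * exp (-δ * ξ) := by
  obtain ⟨C, δ, hC, hδ, hdecay⟩ := G.decay
  exact ⟨C, δ, hC, hδ, fun ξ hξ => ⟨by linarith [hdecay ξ hξ, abs_nonneg (deriv G.R ξ)],
    by linarith [hdecay ξ hξ, abs_nonneg (G.R ξ)]⟩⟩

lemma exists_abs_energyDensity_le (hσ : 0 ≤ σ) :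
    ∃ A δ : ℝ, 0 < δ ∧ ∀ ξ ≥ 0, |G.energyDensity ξ| ≤ A * exp (-δ * ξ) := by
  obtain ⟨C, δ, hC, hδ, hdecay⟩ := G.exists_abs_le_exp
  obtain ⟨M, hM⟩ := isBounded_iff_forall_norm_le.1
    (G.smooth_phi.continuousOn.isBounded_image_Ici_of_tendsto G.phi_lim)
  simp only [forall_mem_image, mem_Ici, norm_eq_abs] at hM
  refine ⟨2 * C ^ 2 + M * C ^ (2 * σ) * C, δ, hδ, fun ξ hξ => ?_⟩
  obtain ⟨hR, hR'⟩ := hdecay ξ hξ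
  have hRpos := G.R_pos ξ hξ
  rw [abs_of_pos hRpos] at hR
  have he1 : exp (-δ * ξ) ≤ 1 := exp_le_one_iff.2 (by nlinarith)
  have hRC : G.R ξ ≤ C := hR.trans (mul_le_of_le_one_right hC.le he1)
  have hV : |G.phi ξ * G.R ξ ^ (2 * σ + 1)| ≤ M * C ^ (2 * σ) * C * exp (-δ * ξ) := by
    rw [rpow_add hRpos, rpow_one, abs_mul,
      abs_of_pos (by positivity : 0 < G.R ξ ^ (2 * σ) * G.R ξ)]
    calc |G.phi ξ| * (G.R ξ ^ (2 * σ) * G.R ξ) ≤ M * (C ^ (2 * σ) * (C * exp (-δ * ξ))) :=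
          mul_le_mul (hM hξ) (mul_le_mul (rpow_le_rpow hRpos.le hRC (by linarith)) hR
            hRpos.le (by positivity)) (by positivity) ((abs_nonneg _).trans (hM hξ))
      _ = M * C ^ (2 * σ) * C * exp (-δ * ξ) := by ring
  have hsq : deriv G.R ξ ^ 2 + G.R ξ ^ 2 ≤ 2 * C ^ 2 * exp (-δ * ξ) := by
    nlinarith [sq_abs (deriv G.R ξ), abs_nonneg (deriv G.R ξ), exp_pos (-δ * ξ)]
  rw [energyDensity, abs_le]
  constructor <;> nlinarith [abs_le.1 hV, sq_nonneg (deriv G.R ξ), sq_nonneg (G.R ξ)]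

lemma exists_abs_deriv_R_mul_R_le :
    ∃ K δ : ℝ, 0 ≤ K ∧ 0 < δ ∧
      ∀ ξ ≥ 0, |deriv G.R ξ * G.R ξ| ≤ K * exp (-δ * ξ) := by
  obtain ⟨C, δ, hC, hδ, hdecay⟩ := G.exists_abs_le_exp
  refine ⟨C ^ 2, δ, sq_nonneg C, hδ, fun ξ hξ => ?_⟩
  obtain ⟨hR, hR'⟩ := hdecay ξ hξ
  have he1 : exp (-δ * ξ) ≤ 1 := exp_le_one_iff.2 (by nlinarith)
  have hRC : |G.R ξ| ≤ C := hR.trans (mul_le_of_le_one_right hC.le he1)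
  rw [abs_mul]
  nlinarith [abs_nonneg (G.R ξ), abs_nonneg (deriv G.R ξ)]

lemma integrableOn_energyDensity_mul_pow_mul_log (hd : 2 ≤ d) (hσ : 0 ≤ σ) :
    IntegrableOn (fun ξ => G.energyDensity ξ * ξ ^ (d - 1) * log ξ) (Ioi 0) := by
  obtain ⟨A, δ, hδ, hA⟩ := G.exists_abs_energyDensity_le hσ
  refine integrableOn_Ioi_of_abs_le_polyExpWeight (K := A) (n := d - 2) hδ ?_ fun ξ hξ => ?_
  · exact (G.continuousOn_energyDensity.mul (continuous_pow _).continuousOn).mul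
      (continuousOn_log.mono fun x hx => ne_of_gt hx)
  · rw [show d - 1 = d - 2 + 1 by omega]
    exact abs_mul_pow_succ_mul_log_le _ hξ (hA ξ hξ.le)

lemma integrableOn_R_mul_deriv_div_mul_pow (hd : 2 ≤ d) :
    IntegrableOn (fun ξ => G.R ξ * (deriv G.R ξ / ξ) * ξ ^ (d - 1)) (Ioi 0) := by
  obtain ⟨K, δ, hK0, hδ, hK⟩ := G.exists_abs_deriv_R_mul_R_le
  refine integrableOn_Ioi_of_abs_le_polyExpWeight (K := K) (n := d - 2) hδ ?_ fun ξ hξ => ?_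
  · have hquot : ContinuousOn (fun ξ => deriv G.R ξ / ξ) (Ioi 0) :=
      G.contDiffOn_deriv_R.continuousOn.div continuousOn_id fun x hx => ne_of_gt hx
    exact (G.continuousOn_R.mul hquot).mul (continuous_pow _).continuousOn
  · have hrw :
        G.R ξ * (deriv G.R ξ / ξ) * ξ ^ (d - 1) = deriv G.R ξ * G.R ξ * ξ ^ (d - 2) := by
      rw [show d - 1 = d - 2 + 1 by omega, pow_succ]
      field_simp
    rw [hrw, abs_mul, abs_pow, abs_of_pos hξ, polyExpWeight]
    calc |deriv G.R ξ * G.R ξ| * ξ ^ (d - 2) ≤ K * exp (-δ * ξ) * ξ ^ (d - 2) :=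
          mul_le_mul_of_nonneg_right (hK ξ hξ.le) (by positivity)
      _ = K * (ξ ^ (d - 2) * exp (-δ * ξ)) := by ring
      _ ≤ K * ((ξ ^ (d - 2) + ξ ^ (d - 2 + 2)) * exp (-δ * ξ)) := by
          gcongr
          exact le_add_of_nonneg_right (by positivity)

lemma exists_abs_logFlux_le (hd : 2 ≤ d) :
    ∃ K δ : ℝ, 0 < δ ∧ ∀ ξ > 0, |G.logFlux ξ| ≤ K * polyExpWeight (d - 2) δ ξ := by
  obtain ⟨K, δ, -, hδ, hK⟩ := G.exists_abs_deriv_R_mul_R_le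
  refine ⟨K, δ, hδ, fun ξ hξ => ?_⟩
  have hrw : G.logFlux ξ = deriv G.R ξ * G.R ξ * ξ ^ (d - 2 + 1) * log ξ := by
    rw [logFlux, show d - 2 + 1 = d - 1 by omega]
    ring
  rw [hrw]
  exact abs_mul_pow_succ_mul_log_le _ hξ (hK ξ hξ.le)

lemma tendsto_logFlux_atTop (hd : 2 ≤ d) : Tendsto G.logFlux atTop (𝓝 0) := by
  obtain ⟨K, δ, hδ, hK⟩ := G.exists_abs_logFlux_le hd
  refine squeeze_zero_norm' ?_
    (by simpa using (tendsto_polyExpWeight_atTop (d - 2) hδ).const_mul K)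
  filter_upwards [eventually_gt_atTop 0] with ξ hξ using hK ξ hξ

-- Only Mathlib's convention `log 0 = 0`; the real boundary behaviour is the next lemma.
lemma logFlux_zero : G.logFlux 0 = 0 := by
  simp [logFlux]

lemma continuousWithinAt_logFlux_zero (hd : 3 ≤ d) : ContinuousWithinAt G.logFlux (Ici 0) 0 := by
  obtain ⟨K, δ, hδ, hK⟩ := G.exists_abs_logFlux_le (by omega)
  rw [← continuousWithinAt_Ioi_iff_Ici, ContinuousWithinAt, logFlux_zero]
  have hweight := (tendsto_polyExpWeight_zero (by omega : d - 2 ≠ 0) δ).mono_left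
    (nhdsWithin_le_nhds (s := Ioi 0))
  refine squeeze_zero_norm' ?_ (by simpa using hweight.const_mul K)
  filter_upwards [self_mem_nhdsWithin] with ξ hξ using hK ξ hξ

end RadialGroundState

/-- Logarithmically weighted Pohozaev identity (third identity in the proof of Lemma 4.2). -/
theorem groundState_log_pohozaev
    (d : ℕ) (σ : ℝ) (hd : 3 ≤ d) (hσ : σ = 2 / (d : ℝ))
    (G : RadialGroundState d σ) :
    -(∫ ξ in Set.Ioi (0 : ℝ),
        ((deriv G.R ξ) ^ 2 + G.R ξ ^ 2 - G.phi ξ * G.R ξ ^ (2 * σ + 1))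
          * ξ ^ (d - 1) * Real.log ξ)
      = ∫ ξ in Set.Ioi (0 : ℝ), G.R ξ * (deriv G.R ξ / ξ) * ξ ^ (d - 1) := by
  have hσ0 : 0 ≤ σ := hσ ▸ by positivity
  have hlog := G.integrableOn_energyDensity_mul_pow_mul_log (by omega) hσ0
  have hflux := G.integrableOn_R_mul_deriv_div_mul_pow (by omega)
  have hFTC := integral_Ioi_of_hasDerivAt_of_tendsto (G.continuousWithinAt_logFlux_zero hd)
    (fun ξ hξ => G.hasDerivAt_logFlux (by omega) hξ) (hlog.add hflux)
    (G.tendsto_logFlux_atTop (by omega))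
  rw [integral_add hlog hflux, G.logFlux_zero, sub_zero] at hFTC
  exact neg_eq_of_add_eq_zero_right hFTC
end
end
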